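/- For every natural number n, Q_n(t,q) equals the sum, over all Motzkin paths of length n, of the path weight determined by b_h = t·q^h·([h]_q + [h+1]_q) and λ_h = (1 + t^2·q^{2h−1})·[h]_q^2; and R_n(t,q) equals the corresponding sum with b_h = t·q^h·(1+q)·[h+1]_q and λ_h = (1 + t^2·q^{2h})·[h]_q·[h+1]_q. (These Motzkin-path sums are equivalent to the Jacobi continued fraction expansions ∑_n Q_n(t,q) z^n = 𝔍(b_h^Q, λ_h^Q) and ∑_n R_n(t,q) z^n = 𝔍(b_h^R, λ_h^R).) -/

import Mathlib

open Polynomial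

/-- The q-integer `[m]_q = 1 + q + ⋯ + q^{m-1}` as a polynomial in `q` over `ℤ`. -/
noncomputable def qnat (m : ℕ) : Polynomial ℤ := ∑ i ∈ Finset.range m, X ^ i

/-- The q-derivative on `ℤ[q][t]` (outer variable `t`, coefficients in `ℤ[q]`):
`D(t^m) = [m]_q · t^{m-1}`. -/
noncomputable def qD (p : Polynomial (Polynomial ℤ)) : Polynomial (Polynomial ℤ) :=
  p.sum fun m c => C (c * qnat m) * X ^ (m - 1)

/-- The operator `U`: multiplication by `t`. -/
noncomputable def opU (p : Polynomial (Polynomial ℤ)) : Polynomial (Polynomial ℤ) := X * p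

/-- The q-analog `Q_n(t,q)`:
`Q_0 = 1`, `Q_{n+1} = (1+q·t²)·D(Q_n) + t·Q_n`. -/
noncomputable def qPolyQ : ℕ → Polynomial (Polynomial ℤ)
  | 0 => 1
  | n + 1 => (1 + C (X : Polynomial ℤ) * X ^ 2) * qD (qPolyQ n) + X * qPolyQ n

/-- The q-analog `R_n(t,q)`:
`R_0 = 1`, `R_{n+1} = (1+q²·t²)·D(R_n) + (1+q)·t·R_n`. -/
noncomputable def qPolyR : ℕ → Polynomial (Polynomial ℤ)
  | 0 => 1
  | n + 1 => (1 + C ((X : Polynomial ℤ) ^ 2) * X ^ 2) * qD (qPolyR n)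
      + (1 + C (X : Polynomial ℤ)) * X * qPolyR n
/-- A step of a Motzkin path. -/
inductive MStep : Type
  | up : MStep
  | level : MStep
  | down : MStep
  deriving DecidableEq

instance : Fintype MStep :=
  ⟨{MStep.up, MStep.level, MStep.down}, fun x => by cases x <;> simp⟩

/-- Whether a word of Motzkin steps, started at height `h`, stays nonnegative
(never steps down from height 0) and ends at height 0. -/
def isMotzkinFrom : List MStep → ℕ → Bool
  | [], h => h == 0
  | MStep.up :: rest, h => isMotzkinFrom rest (h + 1)
  | MStep.level :: rest, h => isMotzkinFrom rest h
  | MStep.down :: rest, h => h != 0 && isMotzkinFrom rest (h - 1)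

/-- The weight of a Motzkin path started at height `h`: each up step has weight `1`,
each level step at height `h` has weight `b h`, and each down step from height `h`
to `h-1` has weight `lam h`. -/
def mweight {R : Type*} [CommRing R] (b : ℕ → R) (lam : ℕ → R) : List MStep → ℕ → R
  | [], _ => 1
  | MStep.up :: rest, h => mweight b lam rest (h + 1)
  | MStep.level :: rest, h => b h * mweight b lam rest h
  | MStep.down :: rest, h => lam h * mweight b lam rest (h - 1)


/-!
Both identities are instances of one mechanism. Write `A_k = (1 + q^{2k+e} t²) D + m_k t`
with `m_{k+1} = q^{2k+e} (1 + q) + q m_k`, so that `Q_{n+1} = A_0 Q_n` (for `e = 1`,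
`m_k = q^k ([k] + [k+1])`) and `R_{n+1} = A_0 R_n` (for `e = 2`, `m_k = q^k (1+q) [k+1]`).
The q-Leibniz rule `D (t p) = q t D p + p` gives the commutation `D A_k = A_{k+1} D + m_k`,
hence `D^h A_0 = A_h D^h + γ_h D^{h-1}` with `γ_h = m_0 + ⋯ + m_{h-1}`. It follows that
`M_{n,h} = ∏_{i<h} (1 + q^{2i+e} t²) · D^h F_n` satisfies the Motzkin transfer recursion
`M_{n+1,h} = M_{n,h+1} + b_h M_{n,h} + λ_h M_{n,h-1}` with `b_h = t m_h` and
`λ_h = (1 + q^{2h-2+e} t²) γ_h`, and `M_{n,0} = F_n`. Finally `γ_h = [h]²` for `Q`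
and `γ_h = [h][h+1]` for `R`.
-/

open Finset

lemma qnat_zero : qnat 0 = 0 := by simp [qnat]

lemma qnat_one : qnat 1 = 1 := by simp [qnat]

lemma qnat_succ (m : ℕ) : qnat (m + 1) = qnat m + X ^ m := by
  simp [qnat, sum_range_succ]

lemma qnat_succ_eq_X_mul_add_one (m : ℕ) : qnat (m + 1) = X * qnat m + 1 := by
  simp [qnat, sum_range_succ', mul_sum, pow_succ, mul_comm]

lemma qD_monomial (m : ℕ) (c : Polynomial ℤ) :
    qD (monomial m c) = C (c * qnat m) * X ^ (m - 1) :=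
  sum_monomial_index _ _ (by simp)

lemma qD_add (p r : Polynomial (Polynomial ℤ)) : qD (p + r) = qD p + qD r :=
  sum_add_index _ _ _ (by simp) (by simp [add_mul])

lemma qD_zero : qD 0 = 0 := sum_zero_index _

lemma qD_one : qD 1 = 0 := by
  rw [← monomial_zero_one, qD_monomial, qnat_zero, mul_zero, C_0, zero_mul]

lemma qD_C_mul (a : Polynomial ℤ) (p : Polynomial (Polynomial ℤ)) :
    qD (C a * p) = C a * qD p := by
  induction p using Polynomial.induction_on' with
  | add p r hp hr => rw [mul_add, qD_add, hp, hr, qD_add, mul_add]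
  | monomial m c =>
    rw [C_mul_monomial, qD_monomial, qD_monomial, C_mul, C_mul, C_mul]
    ring

lemma qD_X_mul (p : Polynomial (Polynomial ℤ)) :
    qD (X * p) = C X * (X * qD p) + p := by
  induction p using Polynomial.induction_on' with
  | add p r hp hr => rw [mul_add, qD_add, hp, hr, qD_add]; ring
  | monomial m c =>
    rw [X_mul_monomial, qD_monomial, qD_monomial, ← C_mul_X_pow_eq_monomial]
    cases m with
    | zero => simp [qnat_zero, qnat_one]
    | succ k =>
      simp only [Nat.add_sub_cancel, qnat_succ_eq_X_mul_add_one (k + 1), C_mul, C_add, C_1]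
      ring

lemma qD_X_sq_mul (p : Polynomial (Polynomial ℤ)) :
    qD (X ^ 2 * p) = C ((X : Polynomial ℤ) ^ 2) * (X ^ 2 * qD p)
      + (1 + C (X : Polynomial ℤ)) * (X * p) := by
  rw [sq, mul_assoc, qD_X_mul, qD_X_mul, C_pow]
  ring

section Motzkin

variable {R : Type*} [CommRing R]

def motzkinSum (b lam : ℕ → R) (n h : ℕ) : R :=
  ∑ f : Fin n → MStep, if isMotzkinFrom (List.ofFn f) h then mweight b lam (List.ofFn f) h else 0

lemma MStep.sum_univ {M : Type*} [AddCommMonoid M] (g : MStep → M) :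
    ∑ s : MStep, g s = g .up + g .level + g .down := by
  rw [show (univ : Finset MStep) = {.up, .level, .down} from rfl,
    sum_insert (by decide), sum_insert (by decide), sum_singleton, add_assoc]

lemma motzkinSum_zero (b lam : ℕ → R) (h : ℕ) :
    motzkinSum b lam 0 h = if h = 0 then 1 else 0 := by
  simp [motzkinSum, isMotzkinFrom, mweight]

lemma motzkinSum_succ (b lam : ℕ → R) (n h : ℕ) :
    motzkinSum b lam (n + 1) h = motzkinSum b lam n (h + 1) + b h * motzkinSum b lam n h
      + (if h = 0 then 0 else lam h * motzkinSum b lam n (h - 1)) := by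
  rw [motzkinSum, ← (Fin.consEquiv fun _ : Fin (n + 1) => MStep).sum_comp,
    Fintype.sum_prod_type, MStep.sum_univ]
  have ofFn_cons (s : MStep) (g : Fin n → MStep) :
      List.ofFn (Fin.consEquiv (fun _ : Fin (n + 1) => MStep) (s, g)) = s :: List.ofFn g := by
    simp [Fin.consEquiv, List.ofFn_succ]
  simp only [ofFn_cons, isMotzkinFrom, mweight, motzkinSum, mul_sum, mul_ite, mul_zero]
  split_ifs with h0 <;> simp [h0]

end Motzkin

section Transfer

variable (e : ℕ) (m : ℕ → Polynomial ℤ)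

noncomputable def transferOp (k : ℕ) (G : Polynomial (Polynomial ℤ)) :
    Polynomial (Polynomial ℤ) :=
  (1 + X ^ 2 * C ((X : Polynomial ℤ) ^ (2 * k + e))) * qD G + C (m k) * (X * G)

noncomputable def heightFactor (h : ℕ) : Polynomial (Polynomial ℤ) :=
  ∏ i ∈ range h, (1 + X ^ 2 * C ((X : Polynomial ℤ) ^ (2 * i + e)))

variable {e m}

lemma qD_transferOp (hm : ∀ k, m (k + 1) = X ^ (2 * k + e) * (1 + X) + X * m k)
    (k : ℕ) (G : Polynomial (Polynomial ℤ)) :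
    qD (transferOp e m k G) = transferOp e m (k + 1) (qD G) + C (m k) * G := by
  have hA : transferOp e m k G = qD G + C ((X : Polynomial ℤ) ^ (2 * k + e)) * (X ^ 2 * qD G)
      + C (m k) * (X * G) := by rw [transferOp]; ring
  rw [hA, qD_add, qD_add, qD_C_mul, qD_C_mul, qD_X_sq_mul, qD_X_mul, transferOp, hm]
  simp only [C_mul, C_add, C_pow, C_1]
  ring

lemma iterate_qD_transferOp_zero (hm : ∀ k, m (k + 1) = X ^ (2 * k + e) * (1 + X) + X * m k)
    (h : ℕ) (G : Polynomial (Polynomial ℤ)) :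
    qD^[h + 1] (transferOp e m 0 G)
      = transferOp e m (h + 1) (qD^[h + 1] G) + C (∑ j ∈ range (h + 1), m j) * qD^[h] G := by
  induction h with
  | zero => simpa using qD_transferOp hm 0 G
  | succ h ih =>
    rw [Function.iterate_succ_apply', ih, qD_add, qD_C_mul, qD_transferOp hm,
      ← Function.iterate_succ_apply' qD, ← Function.iterate_succ_apply' qD,
      sum_range_succ _ (h + 1), C_add]
    ring

theorem motzkinSum_eq_heightFactor_mul_iterate_qD
    (hm : ∀ k, m (k + 1) = X ^ (2 * k + e) * (1 + X) + X * m k)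
    {F : ℕ → Polynomial (Polynomial ℤ)} (hF0 : F 0 = 1)
    (hF : ∀ n, F (n + 1) = transferOp e m 0 (F n)) {lam : ℕ → Polynomial (Polynomial ℤ)}
    (hlam : ∀ h, lam (h + 1) =
      (1 + X ^ 2 * C ((X : Polynomial ℤ) ^ (2 * h + e))) * C (∑ j ∈ range (h + 1), m j))
    (n h : ℕ) :
    motzkinSum (fun h => X * C (m h)) lam n h = heightFactor e h * qD^[h] (F n) := by
  induction n generalizing h with
  | zero =>
    rcases h with _ | h
    · simp [motzkinSum_zero, heightFactor, hF0]
    · rw [motzkinSum_zero, if_neg h.succ_ne_zero, hF0, Function.iterate_succ_apply, qD_one,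
        Function.iterate_fixed qD_zero, mul_zero]
  | succ n ih =>
    rw [motzkinSum_succ, ih, ih, hF]
    rcases h with _ | h
    · simp [heightFactor, transferOp]
      ring
    · rw [if_neg h.succ_ne_zero, Nat.add_sub_cancel, ih, hlam, iterate_qD_transferOp_zero hm,
        transferOp, heightFactor, heightFactor, heightFactor, prod_range_succ _ (h + 1),
        prod_range_succ _ h, ← Function.iterate_succ_apply' qD]
      ring

theorem eq_motzkinSum_of_transferOp
    (hm : ∀ k, m (k + 1) = X ^ (2 * k + e) * (1 + X) + X * m k)
    {F : ℕ → Polynomial (Polynomial ℤ)} (hF0 : F 0 = 1)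
    (hF : ∀ n, F (n + 1) = transferOp e m 0 (F n)) {lam : ℕ → Polynomial (Polynomial ℤ)}
    (hlam : ∀ h, lam (h + 1) =
      (1 + X ^ 2 * C ((X : Polynomial ℤ) ^ (2 * h + e))) * C (∑ j ∈ range (h + 1), m j))
    (n : ℕ) : F n = motzkinSum (fun h => X * C (m h)) lam n 0 := by
  rw [motzkinSum_eq_heightFactor_mul_iterate_qD hm hF0 hF hlam, heightFactor, prod_range_zero,
    one_mul, Function.iterate_zero_apply]

end Transfer

lemma qnat_sq_eq_sum (h : ℕ) :
    qnat h ^ 2 = ∑ j ∈ range h, X ^ j * (qnat j + qnat (j + 1)) := by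
  induction h with
  | zero => simp [qnat_zero]
  | succ h ih => rw [sum_range_succ, ← ih, qnat_succ]; ring

lemma qnat_mul_qnat_succ_eq_sum (h : ℕ) :
    qnat h * qnat (h + 1) = ∑ j ∈ range h, X ^ j * (1 + X) * qnat (j + 1) := by
  induction h with
  | zero => simp [qnat_zero]
  | succ h ih => rw [sum_range_succ, ← ih, qnat_succ (h + 1), qnat_succ h]; ring

theorem qPolyQ_eq_motzkinSum (n : ℕ) :
    qPolyQ n = motzkinSum (fun h => X * C ((X : Polynomial ℤ) ^ h * (qnat h + qnat (h + 1))))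
      (fun h => (1 + X ^ 2 * C ((X : Polynomial ℤ) ^ (2 * h - 1))) * C (qnat h) ^ 2) n 0 := by
  refine eq_motzkinSum_of_transferOp (e := 1) (fun k => ?_) rfl (fun n => ?_) (fun h => ?_) n
  · simp only [qnat_succ]; ring
  · simp [qPolyQ, transferOp, qnat_zero, qnat_one]
  · rw [← qnat_sq_eq_sum, C_pow (a := qnat _), show 2 * (h + 1) - 1 = 2 * h + 1 by omega]

theorem qPolyR_eq_motzkinSum (n : ℕ) :
    qPolyR n = motzkinSum (fun h => X * C ((X : Polynomial ℤ) ^ h * (1 + X) * qnat (h + 1)))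
      (fun h => (1 + X ^ 2 * C ((X : Polynomial ℤ) ^ (2 * h))) * C (qnat h * qnat (h + 1)))
      n 0 := by
  refine eq_motzkinSum_of_transferOp (e := 2) (fun k => ?_) rfl (fun n => ?_) (fun h => ?_) n
  · simp only [qnat_succ (k + 1)]; ring
  · simp [qPolyR, transferOp, qnat_one]
    ring
  · rw [← qnat_mul_qnat_succ_eq_sum, mul_add_one]

theorem stmt9 (n : ℕ) :
    (qPolyQ n = ∑ f : Fin n → MStep,
      if isMotzkinFrom (List.ofFn f) 0 then
        mweight
          (fun h => X * C ((X : Polynomial ℤ) ^ h * (qnat h + qnat (h + 1))))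
          (fun h => (1 + X ^ 2 * C ((X : Polynomial ℤ) ^ (2 * h - 1))) * C (qnat h) ^ 2)
          (List.ofFn f) 0
      else 0) ∧
    (qPolyR n = ∑ f : Fin n → MStep,
      if isMotzkinFrom (List.ofFn f) 0 then
        mweight
          (fun h => X * C ((X : Polynomial ℤ) ^ h * (1 + X) * qnat (h + 1)))
          (fun h => (1 + X ^ 2 * C ((X : Polynomial ℤ) ^ (2 * h))) * C (qnat h * qnat (h + 1)))
          (List.ofFn f) 0
      else 0) :=
  ⟨qPolyQ_eq_motzkinSum n, qPolyR_eq_motzkinSum n⟩
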